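/- Let y = Xξ + Z1·u_a + Z2·u_b + Z3·u_c + e, where the components of u_a ∈ ℝ^g, u_b ∈ ℝ^h, u_c ∈ ℝ^{gh} and e ∈ ℝ^n together form a mutually independent family of square-integrable, mean-zero real random variables with variances σα², σβ², σγ², σe² respectively. Let V = σα²·Z1Z1^T + σβ²·Z2Z2^T + σγ²·Z3Z3^T + σe²·I_n (which is the covariance matrix of y and is invertible since σe² > 0), assume X^T V^{-1} X is invertible, and set P = V^{-1} − V^{-1}X(X^T V^{-1} X)^{-1}X^T V^{-1}. Then for every row index i with 1 ≤ i ≤ g, the prediction mean squared error of the BLUP of (u_a)_i at the true variance parameters equals E[(σα²·(Z1^T P y)_i − (u_a)_i)²] = σα² − σα⁴·(Z1^T P Z1)_{ii}. -/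

import Mathlib

open Matrix MeasureTheory ProbabilityTheory BigOperators

/-- The design matrix `Z1 = I_g ⊗ 1_h ⊗ 1_m` of the row random effects. -/
noncomputable def Z1 (g h m : ℕ) : Matrix ((Fin g × Fin h) × Fin m) (Fin g) ℝ :=
  Matrix.of fun idx i => if idx.1.1 = i then 1 else 0

/-- The design matrix `Z2 = 1_g ⊗ I_h ⊗ 1_m` of the column random effects. -/
noncomputable def Z2 (g h m : ℕ) : Matrix ((Fin g × Fin h) × Fin m) (Fin h) ℝ :=
  Matrix.of fun idx j => if idx.1.2 = j then 1 else 0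

/-- The design matrix `Z3 = I_g ⊗ I_h ⊗ 1_m` of the interaction random effects. -/
noncomputable def Z3 (g h m : ℕ) : Matrix ((Fin g × Fin h) × Fin m) (Fin g × Fin h) ℝ :=
  Matrix.of fun idx ij => if idx.1 = ij then 1 else 0

/-- The marginal covariance matrix
`V = σα² Z1Z1ᵀ + σβ² Z2Z2ᵀ + σγ² Z3Z3ᵀ + σe² I_n`. -/
noncomputable def Vmat (g h m : ℕ) (σα2 σβ2 σγ2 σe2 : ℝ) :
    Matrix ((Fin g × Fin h) × Fin m) ((Fin g × Fin h) × Fin m) ℝ :=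
  σα2 • (Z1 g h m * (Z1 g h m)ᵀ) + σβ2 • (Z2 g h m * (Z2 g h m)ᵀ) +
  σγ2 • (Z3 g h m * (Z3 g h m)ᵀ) + σe2 • 1

/-- The projection-type matrix `P = V⁻¹ − V⁻¹X(Xᵀ V⁻¹ X)⁻¹Xᵀ V⁻¹`. -/
noncomputable def Pmat (g h m p : ℕ) (σα2 σβ2 σγ2 σe2 : ℝ)
    (X : Matrix ((Fin g × Fin h) × Fin m) (Fin p) ℝ) :
    Matrix ((Fin g × Fin h) × Fin m) ((Fin g × Fin h) × Fin m) ℝ :=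
  (Vmat g h m σα2 σβ2 σγ2 σe2)⁻¹ -
    (Vmat g h m σα2 σβ2 σγ2 σe2)⁻¹ * X *
      (Xᵀ * (Vmat g h m σα2 σβ2 σγ2 σe2)⁻¹ * X)⁻¹ * Xᵀ *
      (Vmat g h m σα2 σβ2 σγ2 σe2)⁻¹

section AuxLemmas

/-- The product of two L² functions is integrable. -/
lemma aux_mul_integrable {Ω : Type*} [MeasureSpace Ω] {f g : Ω → ℝ}
    (hf : MemLp f 2 ℙ) (hg : MemLp g 2 ℙ) :
    Integrable (fun ω => f ω * g ω) ℙ := by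
  have h : (1 : ENNReal) / 1 = 1 / 2 + 1 / 2 := by
    rw [ENNReal.div_add_div_same, one_div_one, one_add_one_eq_two,
      ENNReal.div_self two_ne_zero ENNReal.ofNat_ne_top]
  have h2 : MemLp (f • g) 1 ℙ := MemLp.smul hg hf
  rw [memLp_one_iff_integrable] at h2
  exact h2

/-- Second moment of a linear combination of independent centered L² random variables. -/
lemma aux_integral_sq_sum {Ω : Type*} [MeasureSpace Ω] [IsProbabilityMeasure (ℙ : Measure Ω)]
    {ι : Type*} [Fintype ι] (f : ι → Ω → ℝ) (c : ι → ℝ) (σ2 : ι → ℝ)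
    (hindep : iIndepFun f ℙ)
    (hL2 : ∀ k, MemLp (f k) 2 ℙ) (h0 : ∀ k, ∫ ω, f k ω = 0)
    (hvar : ∀ k, ∫ ω, (f k ω) ^ 2 = σ2 k) :
    ∫ ω, (∑ k, c k * f k ω) ^ 2 = ∑ k, (c k) ^ 2 * σ2 k := by
  have hint : ∀ k l : ι, Integrable (fun ω => (c k * f k ω) * (c l * f l ω)) ℙ := by
    intro k l
    have h1 := (aux_mul_integrable (hL2 k) (hL2 l)).const_mul (c k * c l)
    have h2 : (fun ω => (c k * f k ω) * (c l * f l ω))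
        = fun ω => (c k * c l) * (f k ω * f l ω) := by
      funext ω; ring
    rw [h2]; exact h1
  calc ∫ ω, (∑ k, c k * f k ω) ^ 2
      = ∫ ω, ∑ k, ∑ l, (c k * f k ω) * (c l * f l ω) := by
        congr 1; funext ω; rw [sq, Finset.sum_mul_sum]
    _ = ∑ k, ∑ l, ∫ ω, (c k * f k ω) * (c l * f l ω) := by
        rw [integral_finset_sum _ fun k _ => integrable_finset_sum _ fun l _ => hint k l]
        exact Finset.sum_congr rfl fun k _ => integral_finset_sum _ fun l _ => hint k l
    _ = ∑ k, (c k) ^ 2 * σ2 k := by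
        refine Finset.sum_congr rfl fun k _ => ?_
        rw [Finset.sum_eq_single k]
        · have h2 : (fun ω => (c k * f k ω) * (c k * f k ω))
              = fun ω => (c k) ^ 2 * (f k ω) ^ 2 := by funext ω; ring
          rw [h2, integral_const_mul, hvar k]
        · intro l _ hlk
          have h2 : (fun ω => (c k * f k ω) * (c l * f l ω))
              = fun ω => (c k * c l) * (f k ω * f l ω) := by funext ω; ring
          rw [h2, integral_const_mul]
          have h3 := (hindep.indepFun (Ne.symm hlk)).integral_mul_eq_mul_integral
            (hL2 k).aestronglyMeasurable (hL2 l).aestronglyMeasurable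
          have h4 : ∫ ω, f k ω * f l ω = (∫ ω, f k ω) * ∫ ω, f l ω := h3
          rw [h4, h0 k, zero_mul, mul_zero]
        · intro hk; exact absurd (Finset.mem_univ k) hk

lemma aux_posSemidef_smul {n : Type*} [Fintype n] {A : Matrix n n ℝ} (hA : A.PosSemidef)
    {c : ℝ} (hc : 0 ≤ c) : (c • A).PosSemidef := by
  refine ⟨?_, fun x => ?_⟩
  · unfold Matrix.IsHermitian
    rw [Matrix.conjTranspose_smul, hA.1]
    simp
  · exact (hA.smul hc).2 x

lemma aux_posDef_smul {n : Type*} [Fintype n] {A : Matrix n n ℝ} (hA : A.PosDef)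
    {c : ℝ} (hc : 0 < c) : (c • A).PosDef := by
  refine ⟨?_, fun x hx => ?_⟩
  · unfold Matrix.IsHermitian
    rw [Matrix.conjTranspose_smul, hA.1]
    simp
  · exact (hA.smul hc).2 hx

lemma aux_psd_mul_transpose {n κ : Type*} [Fintype n] [Fintype κ] (Z : Matrix n κ ℝ) :
    (Z * Zᵀ).PosSemidef := by
  have h := Matrix.posSemidef_self_mul_conjTranspose Z
  rwa [Matrix.conjTranspose_eq_transpose_of_trivial] at h

lemma aux_Vmat_posDef (g h m : ℕ) {σα2 σβ2 σγ2 σe2 : ℝ} (hσα : 0 ≤ σα2) (hσβ : 0 ≤ σβ2)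
    (hσγ : 0 ≤ σγ2) (hσe : 0 < σe2) : (Vmat g h m σα2 σβ2 σγ2 σe2).PosDef := by
  unfold Vmat
  have h1 := aux_posSemidef_smul (aux_psd_mul_transpose (Z1 g h m)) hσα
  have h2 := aux_posSemidef_smul (aux_psd_mul_transpose (Z2 g h m)) hσβ
  have h3 := aux_posSemidef_smul (aux_psd_mul_transpose (Z3 g h m)) hσγ
  have h4 : ((σe2 : ℝ) • (1 : Matrix ((Fin g × Fin h) × Fin m) ((Fin g × Fin h) × Fin m) ℝ)).PosDef :=
    aux_posDef_smul Matrix.PosDef.one hσe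
  exact Matrix.PosDef.posSemidef_add ((h1.add h2).add h3) h4

end AuxLemmas

set_option maxHeartbeats 1000000

/-- In the mixed model `y = Xξ + Z1 u_a + Z2 u_b + Z3 u_c + e` with mutually independent
mean-zero square-integrable random components of variances `σα², σβ², σγ², σe²`, the
prediction mean squared error of the BLUP of `(u_a)_i` at the true variance parameters is
`E[(σα² (Z1ᵀ P y)_i − (u_a)_i)²] = σα² − σα⁴ (Z1ᵀ P Z1)_{ii}`; moreover `V` is invertible
since `σe² > 0`. -/
theorem blup_prediction_mse {Ω : Type*} [MeasureSpace Ω]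
    [IsProbabilityMeasure (ℙ : Measure Ω)]
    (g h m p : ℕ) (hg : 0 < g) (hh : 0 < h) (hm : 0 < m) (hp : 1 ≤ p)
    (X : Matrix ((Fin g × Fin h) × Fin m) (Fin p) ℝ) (ξ : Fin p → ℝ)
    (σα2 σβ2 σγ2 σe2 : ℝ) (hσα : 0 ≤ σα2) (hσβ : 0 ≤ σβ2) (hσγ : 0 ≤ σγ2)
    (hσe : 0 < σe2)
    (ua : Fin g → Ω → ℝ) (ub : Fin h → Ω → ℝ) (uc : Fin g × Fin h → Ω → ℝ)
    (e : (Fin g × Fin h) × Fin m → Ω → ℝ)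
    (hindep : iIndepFun
      (Sum.elim ua (Sum.elim ub (Sum.elim uc e))) ℙ)
    (huaL2 : ∀ i, MemLp (ua i) 2 ℙ) (hubL2 : ∀ j, MemLp (ub j) 2 ℙ)
    (hucL2 : ∀ ij, MemLp (uc ij) 2 ℙ) (heL2 : ∀ idx, MemLp (e idx) 2 ℙ)
    (hua0 : ∀ i, ∫ ω, ua i ω = 0) (hub0 : ∀ j, ∫ ω, ub j ω = 0)
    (huc0 : ∀ ij, ∫ ω, uc ij ω = 0) (he0 : ∀ idx, ∫ ω, e idx ω = 0)
    (huavar : ∀ i, ∫ ω, (ua i ω) ^ 2 = σα2) (hubvar : ∀ j, ∫ ω, (ub j ω) ^ 2 = σβ2)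
    (hucvar : ∀ ij, ∫ ω, (uc ij ω) ^ 2 = σγ2) (hevar : ∀ idx, ∫ ω, (e idx ω) ^ 2 = σe2)
    (y : Ω → ((Fin g × Fin h) × Fin m) → ℝ)
    (hy : ∀ ω, y ω = X *ᵥ ξ + Z1 g h m *ᵥ (fun i => ua i ω) +
      Z2 g h m *ᵥ (fun j => ub j ω) + Z3 g h m *ᵥ (fun ij => uc ij ω) +
      (fun idx => e idx ω))
    (hX : IsUnit (Xᵀ * (Vmat g h m σα2 σβ2 σγ2 σe2)⁻¹ * X).det) :
    IsUnit (Vmat g h m σα2 σβ2 σγ2 σe2).det ∧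
    ∀ i : Fin g,
      ∫ ω, (σα2 * (((Z1 g h m)ᵀ *ᵥ (Pmat g h m p σα2 σβ2 σγ2 σe2 X *ᵥ y ω)) i)
              - ua i ω) ^ 2
        = σα2 - σα2 ^ 2 * ((Z1 g h m)ᵀ * Pmat g h m p σα2 σβ2 σγ2 σe2 X * Z1 g h m) i i := by
  classical
  have hVpd := aux_Vmat_posDef g h m hσα hσβ hσγ hσe
  set V : Matrix ((Fin g × Fin h) × Fin m) ((Fin g × Fin h) × Fin m) ℝ :=
    Vmat g h m σα2 σβ2 σγ2 σe2 with hVdef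
  have hVdet : IsUnit V.det := hVpd.det_pos.ne'.isUnit
  refine ⟨hVdet, fun i => ?_⟩
  set P := Pmat g h m p σα2 σβ2 σγ2 σe2 X with hPdef
  have hVV : V⁻¹ * V = 1 := Matrix.nonsing_inv_mul V hVdet
  have hVsymm : Vᵀ = V := by
    rw [← Matrix.conjTranspose_eq_transpose_of_trivial]
    exact hVpd.1
  have hVinvT : (V⁻¹)ᵀ = V⁻¹ := by rw [Matrix.transpose_nonsing_inv, hVsymm]
  have hAsymm : (Xᵀ * V⁻¹ * X)ᵀ = Xᵀ * V⁻¹ * X := by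
    rw [Matrix.transpose_mul, Matrix.transpose_mul, Matrix.transpose_transpose, hVinvT,
      Matrix.mul_assoc]
  have hAinvT : ((Xᵀ * V⁻¹ * X)⁻¹)ᵀ = (Xᵀ * V⁻¹ * X)⁻¹ := by
    rw [Matrix.transpose_nonsing_inv, hAsymm]
  have hPX : P * X = 0 := by
    rw [hPdef]; unfold Pmat; rw [← hVdef]
    rw [Matrix.sub_mul]
    rw [Matrix.mul_assoc _ V⁻¹ X]
    rw [Matrix.mul_assoc (V⁻¹ * X * (Xᵀ * V⁻¹ * X)⁻¹) Xᵀ (V⁻¹ * X)]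
    rw [← Matrix.mul_assoc Xᵀ V⁻¹ X]
    rw [Matrix.mul_assoc (V⁻¹ * X) ((Xᵀ * V⁻¹ * X)⁻¹) (Xᵀ * V⁻¹ * X)]
    rw [Matrix.nonsing_inv_mul _ hX, Matrix.mul_one, sub_self]
  have hPsymm : Pᵀ = P := by
    rw [hPdef]; unfold Pmat; rw [← hVdef]
    simp only [Matrix.transpose_sub, Matrix.transpose_mul, Matrix.transpose_transpose,
      hVinvT, hAinvT]
    simp only [Matrix.mul_assoc]
  have hXtP : Xᵀ * P = 0 := by
    rw [← hPsymm, ← Matrix.transpose_mul, hPX, Matrix.transpose_zero]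
  have hPV : P * V = 1 - V⁻¹ * X * (Xᵀ * V⁻¹ * X)⁻¹ * Xᵀ := by
    rw [hPdef]; unfold Pmat; rw [← hVdef]
    rw [Matrix.sub_mul, Matrix.nonsing_inv_mul V hVdet,
      Matrix.mul_assoc (V⁻¹ * X * (Xᵀ * V⁻¹ * X)⁻¹ * Xᵀ) V⁻¹ V, hVV, Matrix.mul_one]
  have hPVP : P * V * P = P := by
    rw [hPV, Matrix.sub_mul, Matrix.one_mul,
      Matrix.mul_assoc (V⁻¹ * X * (Xᵀ * V⁻¹ * X)⁻¹) Xᵀ P, hXtP, Matrix.mul_zero, sub_zero]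
  set N : Matrix (Fin g) ((Fin g × Fin h) × Fin m) ℝ := (Z1 g h m)ᵀ * P with hNdef
  have hNVNt : N * V * Nᵀ = N * Z1 g h m := by
    have hNT : Nᵀ = P * Z1 g h m := by
      rw [hNdef, Matrix.transpose_mul, Matrix.transpose_transpose, hPsymm]
    rw [hNT, ← Matrix.mul_assoc (N * V) P (Z1 g h m)]
    congr 1
    rw [hNdef, Matrix.mul_assoc (Z1 g h m)ᵀ P V, Matrix.mul_assoc (Z1 g h m)ᵀ (P * V) P,
      hPVP]
  set w : ((Fin g × Fin h) × Fin m) → ℝ := fun idx => σα2 * N i idx with hwdef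
  have hw_dot : ∀ x : ((Fin g × Fin h) × Fin m) → ℝ,
      σα2 * (((Z1 g h m)ᵀ *ᵥ (P *ᵥ x)) i) = w ⬝ᵥ x := by
    intro x
    rw [Matrix.mulVec_mulVec, ← hNdef]
    simp only [hwdef, Matrix.mulVec, dotProduct, Finset.mul_sum]
    exact Finset.sum_congr rfl fun idx _ => by ring
  have hNX : N * X = 0 := by rw [hNdef, Matrix.mul_assoc, hPX, Matrix.mul_zero]
  have hwX : w ᵥ* X = 0 := by
    funext j
    have h1 : (w ᵥ* X) j = σα2 * ((N * X) i j) := by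
      simp only [hwdef, Matrix.vecMul, dotProduct, Matrix.mul_apply, Finset.mul_sum]
      exact Finset.sum_congr rfl fun idx _ => by ring
    rw [h1, hNX]
    simp
  set cA : Fin g → ℝ := fun a => (w ᵥ* Z1 g h m) a - (if a = i then 1 else 0) with hcA
  set cB : Fin h → ℝ := fun b => (w ᵥ* Z2 g h m) b with hcB
  set cC : Fin g × Fin h → ℝ := fun ij => (w ᵥ* Z3 g h m) ij with hcC
  have key : ∀ ω, σα2 * (((Z1 g h m)ᵀ *ᵥ (P *ᵥ y ω)) i) - ua i ω
      = ∑ k, Sum.elim cA (Sum.elim cB (Sum.elim cC w)) k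
          * Sum.elim ua (Sum.elim ub (Sum.elim uc e)) k ω := by
    intro ω
    rw [Fintype.sum_sum_type, Fintype.sum_sum_type, Fintype.sum_sum_type]
    simp only [Sum.elim_inl, Sum.elim_inr]
    rw [hw_dot (y ω), hy ω]
    simp only [dotProduct_add]
    rw [Matrix.dotProduct_mulVec w X ξ, hwX, zero_dotProduct,
      Matrix.dotProduct_mulVec w (Z1 g h m), Matrix.dotProduct_mulVec w (Z2 g h m),
      Matrix.dotProduct_mulVec w (Z3 g h m)]
    have hA : ∑ a, cA a * ua a ω = (w ᵥ* Z1 g h m) ⬝ᵥ (fun a => ua a ω) - ua i ω := by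
      simp only [hcA, sub_mul, ite_mul, one_mul, zero_mul]
      rw [Finset.sum_sub_distrib]
      congr 1
      exact Fintype.sum_ite_eq' i (fun a => ua a ω)
    have hB : ∑ b, cB b * ub b ω = (w ᵥ* Z2 g h m) ⬝ᵥ (fun b => ub b ω) := rfl
    have hC : ∑ ij, cC ij * uc ij ω = (w ᵥ* Z3 g h m) ⬝ᵥ (fun ij => uc ij ω) := rfl
    have hD : ∑ idx, w idx * e idx ω = w ⬝ᵥ (fun idx => e idx ω) := rfl
    rw [hA, hB, hC, hD]
    ring
  have hsq : ∀ {κ : Type} [Fintype κ] (v : κ → ℝ), ∑ x, v x ^ 2 = v ⬝ᵥ v := by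
    intro κ _ v; simp [dotProduct, sq]
  calc ∫ ω, (σα2 * (((Z1 g h m)ᵀ *ᵥ (P *ᵥ y ω)) i) - ua i ω) ^ 2
      = ∫ ω, (∑ k, Sum.elim cA (Sum.elim cB (Sum.elim cC w)) k
          * Sum.elim ua (Sum.elim ub (Sum.elim uc e)) k ω) ^ 2 :=
        congrArg (integral ℙ) (funext fun ω => by rw [key ω])
    _ = ∑ k, (Sum.elim cA (Sum.elim cB (Sum.elim cC w)) k) ^ 2
          * Sum.elim (fun _ : Fin g => σα2) (Sum.elim (fun _ : Fin h => σβ2)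
              (Sum.elim (fun _ : Fin g × Fin h => σγ2)
                (fun _ : (Fin g × Fin h) × Fin m => σe2))) k := by
        apply aux_integral_sq_sum _ _ _ hindep
        · intro k; rcases k with a | b | ij | idx
          exacts [huaL2 a, hubL2 b, hucL2 ij, heL2 idx]
        · intro k; rcases k with a | b | ij | idx
          exacts [hua0 a, hub0 b, huc0 ij, he0 idx]
        · intro k; rcases k with a | b | ij | idx
          exacts [huavar a, hubvar b, hucvar ij, hevar idx]
    _ = σα2 - σα2 ^ 2 * ((N * Z1 g h m) i i) := by
        rw [Fintype.sum_sum_type, Fintype.sum_sum_type, Fintype.sum_sum_type]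
        simp only [Sum.elim_inl, Sum.elim_inr]
        have hqf : ∀ {κ : Type} [Fintype κ] (Z : Matrix ((Fin g × Fin h) × Fin m) κ ℝ),
            w ⬝ᵥ ((Z * Zᵀ) *ᵥ w) = (w ᵥ* Z) ⬝ᵥ (w ᵥ* Z) := by
          intro κ _ Z
          rw [← Matrix.mulVec_mulVec, Matrix.dotProduct_mulVec, Matrix.mulVec_transpose]
        have hVw : w ⬝ᵥ (V *ᵥ w)
            = σα2 * ((w ᵥ* Z1 g h m) ⬝ᵥ (w ᵥ* Z1 g h m))
            + σβ2 * ((w ᵥ* Z2 g h m) ⬝ᵥ (w ᵥ* Z2 g h m))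
            + σγ2 * ((w ᵥ* Z3 g h m) ⬝ᵥ (w ᵥ* Z3 g h m))
            + σe2 * (w ⬝ᵥ w) := by
          rw [hVdef]
          unfold Vmat
          simp only [Matrix.add_mulVec, Matrix.smul_mulVec, Matrix.one_mulVec,
            dotProduct_add, dotProduct_smul, smul_eq_mul]
          rw [hqf (Z1 g h m), hqf (Z2 g h m), hqf (Z3 g h m)]
        have hVw2 : w ⬝ᵥ (V *ᵥ w) = σα2 ^ 2 * ((N * Z1 g h m) i i) := by
          have h1 : w ⬝ᵥ (V *ᵥ w) = σα2 * σα2 * ((N * V * Nᵀ) i i) := by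
            simp only [hwdef, Matrix.mulVec, dotProduct, Matrix.mul_apply,
              Matrix.transpose_apply, Finset.mul_sum, Finset.sum_mul]
            rw [Finset.sum_comm]
            exact Finset.sum_congr rfl fun k _ => Finset.sum_congr rfl fun j _ => by ring
          rw [h1, hNVNt]; ring
        have hmid : (w ᵥ* Z1 g h m) i = σα2 * ((N * Z1 g h m) i i) := by
          simp only [hwdef, Matrix.vecMul, dotProduct, Matrix.mul_apply,
            Finset.mul_sum]
          exact Finset.sum_congr rfl fun idx _ => by ring
        have hAsum : ∑ a, cA a ^ 2
            = (w ᵥ* Z1 g h m) ⬝ᵥ (w ᵥ* Z1 g h m) - 2 * (w ᵥ* Z1 g h m) i + 1 := by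
          have expand : ∀ a : Fin g, cA a ^ 2
              = (w ᵥ* Z1 g h m) a ^ 2
                - (if a = i then 2 * (w ᵥ* Z1 g h m) a else 0)
                + (if a = i then 1 else 0) := by
            intro a
            by_cases hai : a = i
            · simp only [hcA]
              rw [if_pos hai, if_pos hai]
              ring
            · simp only [hcA]
              rw [if_neg hai, if_neg hai]
              ring
          rw [Finset.sum_congr rfl fun a _ => expand a, Finset.sum_add_distrib,
            Finset.sum_sub_distrib, Fintype.sum_ite_eq' i (fun a => 2 * (w ᵥ* Z1 g h m) a),
            Fintype.sum_ite_eq' i (fun _ => (1 : ℝ)), hsq]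
        simp only [← Finset.sum_mul]
        simp only [hcB, hcC]
        rw [hsq (w ᵥ* Z2 g h m), hsq (w ᵥ* Z3 g h m), hsq w, hAsum]
        linear_combination hVw2 - hVw - 2 * σα2 * hmid
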